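/- The free flow fails to be a reference for the Euler problem unless μ₁ = μ₂: fix c > 0 and consider the free trajectory q(t) = (c, 0, t), p(t) = (0, 0, 1). Then lim_{t→+∞} G(q(t), p(t)) = 1/2 + c²/2 + a(μ₁ − μ₂) and lim_{t→−∞} G(q(t), p(t)) = 1/2 + c²/2 − a(μ₁ − μ₂). In particular the two limits differ by 2a(μ₁ − μ₂), so they are equal for all such trajectories only if μ₁ = μ₂. -/

import Mathlib

noncomputable section

open Real Filter Topology
open scoped RealInnerProductSpace

/-- Euclidean 3-space. -/
abbrev R3 : Type := EuclideanSpace ℝ (Fin 3)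

/-- The vector `(x, y, z)` in `R3`. -/
def vec3 (x y z : ℝ) : R3 := (WithLp.equiv 2 (Fin 3 → ℝ)).symm ![x, y, z]

/-- The first center `o₁ = (0,0,-a)`. -/
def ctr1 (a : ℝ) : R3 := vec3 0 0 (-a)

/-- The second center `o₂ = (0,0,a)`. -/
def ctr2 (a : ℝ) : R3 := vec3 0 0 a

/-- The Euler two-center potential `V(q) = -μ₁/r₁(q) - μ₂/r₂(q)`. -/
def eulerV (a μ1 μ2 : ℝ) (q : R3) : ℝ := -μ1 / ‖q - ctr1 a‖ - μ2 / ‖q - ctr2 a‖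

/-- The angular momentum `L_z(q,p) = x p_y - y p_x`. -/
def angMom (q p : R3) : ℝ := q 0 * p 1 - q 1 * p 0

/-- The cross product `q × p` in `R3`. -/
def cross3 (q p : R3) : R3 :=
  vec3 (q 1 * p 2 - q 2 * p 1) (q 2 * p 0 - q 0 * p 2) (q 0 * p 1 - q 1 * p 0)

/-- The Euler Hamiltonian `H(q,p) = ‖p‖²/2 + V(q)`. -/
def eulerH (a μ1 μ2 : ℝ) (q p : R3) : ℝ := ‖p‖ ^ 2 / 2 + eulerV a μ1 μ2 q

/-- The separation constant
`G(q,p) = H + (‖q×p‖² - a²(pₓ²+p_y²))/2 + a(z+a)μ₁/r₁ - a(z-a)μ₂/r₂`. -/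
def eulerG (a μ1 μ2 : ℝ) (q p : R3) : ℝ :=
  eulerH a μ1 μ2 q p + (‖cross3 q p‖ ^ 2 - a ^ 2 * ((p 0) ^ 2 + (p 1) ^ 2)) / 2
    + a * (q 2 + a) * μ1 / ‖q - ctr1 a‖ - a * (q 2 - a) * μ2 / ‖q - ctr2 a‖

/-!
Along the line `q = (c, 0, t)` with `p = (0, 0, 1)` one has `‖q × p‖ = c`, so `G` is
`1/2 + c²/2` plus the two Coulomb-type terms `μ₁ (a r - 1)/√(c² + r²)` with `r = t + a`
and `-μ₂ (a r + 1)/√(c² + r²)` with `r = t - a`. A ratio `(A r + B)/√(C + r²)` tends to `±A`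
as `r → ±∞`, and this gives the two limits `1/2 + c²/2 ± a(μ₁ - μ₂)`.
-/

@[simp] lemma vec3_apply_zero (x y z : ℝ) : vec3 x y z 0 = x := rfl

@[simp] lemma vec3_apply_one (x y z : ℝ) : vec3 x y z 1 = y := rfl

@[simp] lemma vec3_apply_two (x y z : ℝ) : vec3 x y z 2 = z := rfl

lemma vec3_sub (x y z x' y' z' : ℝ) :
    vec3 x y z - vec3 x' y' z' = vec3 (x - x') (y - y') (z - z') := by
  ext i; fin_cases i <;> rfl

lemma norm_vec3 (x y z : ℝ) : ‖vec3 x y z‖ = √(x ^ 2 + y ^ 2 + z ^ 2) := by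
  simp [vec3, EuclideanSpace.norm_eq, Fin.sum_univ_three, sq]

lemma eulerG_vertical_line (a μ1 μ2 c t : ℝ) :
    eulerG a μ1 μ2 (vec3 c 0 t) (vec3 0 0 1) =
      1 / 2 + c ^ 2 / 2 + μ1 * ((a * (t + a) - 1) / √(c ^ 2 + (t + a) ^ 2))
        - μ2 * ((a * (t - a) + 1) / √(c ^ 2 + (t - a) ^ 2)) := by
  have hr1 : ‖vec3 c 0 t - ctr1 a‖ = √(c ^ 2 + (t + a) ^ 2) := by
    rw [ctr1, vec3_sub, norm_vec3]; ring_nf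
  have hr2 : ‖vec3 c 0 t - ctr2 a‖ = √(c ^ 2 + (t - a) ^ 2) := by
    rw [ctr2, vec3_sub, norm_vec3]; ring_nf
  have hp : ‖vec3 0 0 1‖ = 1 := by simp [norm_vec3]
  have hqp : ‖cross3 (vec3 c 0 t) (vec3 0 0 1)‖ ^ 2 = c ^ 2 := by
    rw [cross3, norm_vec3, sq_sqrt (by positivity)]; simp
  simp only [eulerG, eulerH, eulerV, hr1, hr2, hp, hqp, vec3_apply_zero, vec3_apply_one,
    vec3_apply_two]
  ring

lemma Filter.Tendsto.linear_div_sqrt_atTop {α : Type*} {l : Filter α} {f : α → ℝ}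
    (hf : Tendsto f l atTop) (A B C : ℝ) :
    Tendsto (fun x => (A * f x + B) / √(C + f x ^ 2)) l (𝓝 A) := by
  suffices h : Tendsto (fun r : ℝ => (A * r + B) / √(C + r ^ 2)) atTop (𝓝 A) from h.comp hf
  have hrewrite : ∀ᶠ r : ℝ in atTop,
      (A + B / r) / √(C / r ^ 2 + 1) = (A * r + B) / √(C + r ^ 2) := by
    filter_upwards [eventually_gt_atTop 0] with r hr
    have hsplit : C + r ^ 2 = r ^ 2 * (C / r ^ 2 + 1) := by field_simp
    rw [hsplit, sqrt_mul (sq_nonneg r), sqrt_sq hr.le, ← div_div]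
    congr 1
    field_simp
  have hnum : Tendsto (fun r : ℝ => A + B / r) atTop (𝓝 A) := by
    simpa using (tendsto_const_nhds (x := A)).add
      ((tendsto_const_nhds (x := B)).div_atTop tendsto_id)
  have hden : Tendsto (fun r : ℝ => √(C / r ^ 2 + 1)) atTop (𝓝 1) := by
    simpa using (((tendsto_const_nhds (x := C)).div_atTop (tendsto_pow_atTop two_ne_zero)).add
      (tendsto_const_nhds (x := (1 : ℝ)))).sqrt
  simpa using (hnum.div hden one_ne_zero).congr' hrewrite

lemma Filter.Tendsto.linear_div_sqrt_atBot {α : Type*} {l : Filter α} {f : α → ℝ}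
    (hf : Tendsto f l atBot) (A B C : ℝ) :
    Tendsto (fun x => (A * f x + B) / √(C + f x ^ 2)) l (𝓝 (-A)) := by
  refine ((tendsto_neg_atBot_atTop.comp hf).linear_div_sqrt_atTop (-A) B C).congr fun x => ?_
  simp

lemma tendsto_eulerG_vertical_line {l : Filter ℝ} {a c L : ℝ} (μ1 μ2 : ℝ)
    (h1 : Tendsto (fun t => (a * (t + a) - 1) / √(c ^ 2 + (t + a) ^ 2)) l (𝓝 L))
    (h2 : Tendsto (fun t => (a * (t - a) + 1) / √(c ^ 2 + (t - a) ^ 2)) l (𝓝 L)) :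
    Tendsto (fun t => eulerG a μ1 μ2 (vec3 c 0 t) (vec3 0 0 1)) l
      (𝓝 (1 / 2 + c ^ 2 / 2 + L * (μ1 - μ2))) := by
  simp only [eulerG_vertical_line]
  convert ((tendsto_const_nhds (x := 1 / 2 + c ^ 2 / 2)).add (h1.const_mul μ1)).sub
    (h2.const_mul μ2) using 2
  ring

theorem statement16_general (a μ1 μ2 : ℝ) (c : ℝ) :
    Tendsto (fun t : ℝ => eulerG a μ1 μ2 (vec3 c 0 t) (vec3 0 0 1)) atTop
      (𝓝 (1 / 2 + c ^ 2 / 2 + a * (μ1 - μ2))) ∧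
    Tendsto (fun t : ℝ => eulerG a μ1 μ2 (vec3 c 0 t) (vec3 0 0 1)) atBot
      (𝓝 (1 / 2 + c ^ 2 / 2 - a * (μ1 - μ2))) ∧
    (1 / 2 + c ^ 2 / 2 + a * (μ1 - μ2)) - (1 / 2 + c ^ 2 / 2 - a * (μ1 - μ2))
      = 2 * a * (μ1 - μ2) := by
  refine ⟨tendsto_eulerG_vertical_line μ1 μ2 ?_ ?_, ?_, by ring⟩
  · simpa [sub_eq_add_neg] using
      (tendsto_atTop_add_const_right atTop a tendsto_id).linear_div_sqrt_atTop a (-1) (c ^ 2)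
  · simpa [sub_eq_add_neg] using
      (tendsto_atTop_add_const_right atTop (-a) tendsto_id).linear_div_sqrt_atTop a 1 (c ^ 2)
  · rw [sub_eq_add_neg _ (a * (μ1 - μ2)), ← neg_mul]
    refine tendsto_eulerG_vertical_line μ1 μ2 ?_ ?_
    · simpa [sub_eq_add_neg] using
        (tendsto_atBot_add_const_right atBot a tendsto_id).linear_div_sqrt_atBot a (-1) (c ^ 2)
    · simpa [sub_eq_add_neg] using
        (tendsto_atBot_add_const_right atBot (-a) tendsto_id).linear_div_sqrt_atBot a 1 (c ^ 2)

/-- Along the free trajectory `q(t) = (c,0,t)`, `p(t) = (0,0,1)`, the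
separation constant `G` has limits `1/2 + c²/2 ± a(μ₁−μ₂)` as `t → ±∞`; in particular
the two limits differ by `2a(μ₁−μ₂)`, so the free flow is a reference for the Euler
problem only if `μ₁ = μ₂`. -/
theorem statement16 (a μ1 μ2 : ℝ) (ha : 0 < a) (c : ℝ) (hc : 0 < c) :
    Tendsto (fun t : ℝ => eulerG a μ1 μ2 (vec3 c 0 t) (vec3 0 0 1)) atTop
      (𝓝 (1 / 2 + c ^ 2 / 2 + a * (μ1 - μ2))) ∧
    Tendsto (fun t : ℝ => eulerG a μ1 μ2 (vec3 c 0 t) (vec3 0 0 1)) atBot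
      (𝓝 (1 / 2 + c ^ 2 / 2 - a * (μ1 - μ2))) ∧
    (1 / 2 + c ^ 2 / 2 + a * (μ1 - μ2)) - (1 / 2 + c ^ 2 / 2 - a * (μ1 - μ2))
      = 2 * a * (μ1 - μ2) :=
  statement16_general a μ1 μ2 c
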